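/- arXiv:1010.0629 — 2 statements merged into one kernel-verified Lean document; each statement's English description precedes it below -/
import Mathlib

section
/- Let (R_k)_{k≥1} be i.i.d. nonnegative random variables that are exponentially bounded (P(R_1 ≥ x) ≤ C e^{−γx} for all x ≥ 0, some C < ∞, γ > 0), and let N be a geometric random variable with parameter p ∈ (0,1] (P(N = n) = p(1−p)^{n−1}, n ≥ 1) independent of (R_k). Then the random sum S = R_1 + ⋯ + R_N is exponentially bounded: there exist C' < ∞ and γ' > 0 with P(S ≥ x) ≤ C' e^{−γ' x} for all x ≥ 0. -/
/-!
An exponential tail makes `exp (t * R 1)` integrable for `0 ≤ t < γ`, so the moment generating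
function `m` of `R 1` is continuous at `0`, where it equals `1`; fix `t > 0` with `m t < 1 + p`.
Chernoff's bound for i.i.d. sums gives `P(R 1 + ⋯ + R n ≥ x) ≤ exp (-t x) * m t ^ n`, and
splitting over the values of the independent `N` gives `P(S ≥ x) ≤ exp (-t x) * E[m t ^ N]`,
which is finite because the geometric series `∑ ((1 - p) * m t) ^ n` converges.
-/

open MeasureTheory ProbabilityTheory
open scoped ENNReal Topology

section TailBound

variable {Ω : Type*} [MeasurableSpace Ω] {μ : Measure Ω} {X : Ω → ℝ} {C γ : ℝ}

lemma lintegral_exp_mul_lt_top_of_tail_le (hX : Measurable X) (hX0 : ∀ ω, 0 ≤ X ω)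
    (hbd : ∀ x : ℝ, 0 ≤ x → μ {ω | x ≤ X ω} ≤ ENNReal.ofReal (C * Real.exp (-γ * x)))
    {s : ℝ} (hs : 0 ≤ s) (hsγ : s < γ) :
    ∫⁻ ω, ENNReal.ofReal (Real.exp (s * X ω)) ∂μ < ⊤ := by
  set E : ℕ → Set Ω := fun j => {ω | (j : ℝ) ≤ X ω}
  set r : ℝ≥0∞ := ENNReal.ofReal (Real.exp (s - γ))
  -- Cut `X` into unit bands: on `{j ≤ X < j + 1}` we have `exp (s X) ≤ exp (s (j + 1))`.
  have hpt : ∀ ω, ENNReal.ofReal (Real.exp (s * X ω)) ≤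
      ∑' j : ℕ, (E j).indicator (fun _ => ENNReal.ofReal (Real.exp (s * (j + 1)))) ω := by
    intro ω
    set j := ⌊X ω⌋₊
    have hj : (j : ℝ) ≤ X ω := Nat.floor_le (hX0 ω)
    refine le_trans ?_ (ENNReal.le_tsum j)
    rw [Set.indicator_of_mem (show ω ∈ E j from hj)]
    gcongr
    exact (Nat.lt_floor_add_one (X ω)).le
  have hterm : ∀ j : ℕ, ENNReal.ofReal (Real.exp (s * (j + 1))) * μ (E j) ≤
      ENNReal.ofReal (C * Real.exp s) * r ^ j := by
    intro j
    calc ENNReal.ofReal (Real.exp (s * (j + 1))) * μ (E j)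
        ≤ ENNReal.ofReal (Real.exp (s * (j + 1))) * ENNReal.ofReal (C * Real.exp (-γ * j)) := by
          gcongr; exact hbd j j.cast_nonneg
      _ = ENNReal.ofReal (C * Real.exp s * Real.exp (s - γ) ^ j) := by
          rw [← ENNReal.ofReal_mul (Real.exp_nonneg _), ← Real.exp_nat_mul]
          congr 1
          rw [mul_left_comm, mul_assoc, ← Real.exp_add, ← Real.exp_add]
          ring_nf
      _ = ENNReal.ofReal (C * Real.exp s) * r ^ j := by
          rw [ENNReal.ofReal_mul' (by positivity), ENNReal.ofReal_pow (Real.exp_nonneg _)]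
  have hr : r < 1 := ENNReal.ofReal_lt_one.2 (Real.exp_lt_one_iff.2 (by linarith))
  calc ∫⁻ ω, ENNReal.ofReal (Real.exp (s * X ω)) ∂μ
      ≤ ∑' j : ℕ, ENNReal.ofReal (Real.exp (s * (j + 1))) * μ (E j) := by
        refine (lintegral_mono hpt).trans_eq ?_
        have hE : ∀ j, MeasurableSet (E j) := fun j => measurableSet_le measurable_const hX
        rw [lintegral_tsum fun j => (measurable_const.indicator (hE j)).aemeasurable]
        exact tsum_congr fun j => lintegral_indicator_const (hE j) _
    _ ≤ ∑' j : ℕ, ENNReal.ofReal (C * Real.exp s) * r ^ j := ENNReal.tsum_le_tsum hterm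
    _ < ⊤ := by
        rw [ENNReal.tsum_mul_left]
        exact ENNReal.mul_lt_top ENNReal.ofReal_lt_top (tsum_geometric_lt_top.2 hr)

lemma integrable_exp_mul_of_tail_le (hX : Measurable X) (hX0 : ∀ ω, 0 ≤ X ω)
    (hbd : ∀ x : ℝ, 0 ≤ x → μ {ω | x ≤ X ω} ≤ ENNReal.ofReal (C * Real.exp (-γ * x)))
    {s : ℝ} (hs : 0 ≤ s) (hsγ : s < γ) :
    Integrable (fun ω => Real.exp (s * X ω)) μ := by
  refine ⟨(hX.const_mul s).exp.aestronglyMeasurable, ?_⟩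
  rw [hasFiniteIntegral_iff_ofReal (ae_of_all _ fun ω => Real.exp_nonneg _)]
  exact lintegral_exp_mul_lt_top_of_tail_le hX hX0 hbd hs hsγ

lemma zero_mem_interior_integrableExpSet_of_tail_le [IsFiniteMeasure μ] (hX : Measurable X)
    (hX0 : ∀ ω, 0 ≤ X ω) (hγ : 0 < γ)
    (hbd : ∀ x : ℝ, 0 ≤ x → μ {ω | x ≤ X ω} ≤ ENNReal.ofReal (C * Real.exp (-γ * x))) :
    0 ∈ interior (integrableExpSet X μ) := by
  have hneg : Integrable (fun ω => Real.exp (-1 * X ω)) μ := by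
    refine (integrable_const 1).mono' (hX.const_mul _).exp.aestronglyMeasurable
      (ae_of_all _ fun ω => ?_)
    rw [Real.norm_of_nonneg (Real.exp_nonneg _)]
    exact Real.exp_le_one_iff.2 (by linarith [hX0 ω])
  have hpos := integrable_exp_mul_of_tail_le hX hX0 hbd (half_pos hγ).le (half_lt_self hγ)
  refine interior_mono (s := Set.Icc (-1) (γ / 2)) (fun t ht => integrable_exp_mul_of_le_of_le hneg hpos ht.1 ht.2) ?_
  exact mem_interior_iff_mem_nhds.2 (Icc_mem_nhds (by norm_num) (half_pos hγ))

end TailBound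

lemma exists_pos_mem_integrableExpSet_mgf_lt {Ω : Type*} [MeasurableSpace Ω] {μ : Measure Ω}
    [IsProbabilityMeasure μ] {X : Ω → ℝ} (h0 : 0 ∈ interior (integrableExpSet X μ))
    {q : ℝ} (hq : 1 < q) :
    ∃ t, 0 < t ∧ t ∈ integrableExpSet X μ ∧ mgf X μ t < q := by
  have hcont : ContinuousAt (mgf X μ) 0 :=
    continuousOn_mgf.continuousAt (isOpen_interior.mem_nhds h0)
  have hnear : ∀ᶠ t in 𝓝 0, t ∈ interior (integrableExpSet X μ) ∧ mgf X μ t < q :=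
    Filter.Eventually.and (isOpen_interior.mem_nhds h0) (hcont.eventually (gt_mem_nhds (by rwa [mgf_zero])))
  obtain ⟨t, ⟨hint, hlt⟩, ht⟩ :=
    (Filter.Eventually.and (nhdsWithin_le_nhds (s := Set.Ioi 0) hnear)
      self_mem_nhdsWithin).exists
  exact ⟨t, ht, interior_subset hint, hlt⟩

lemma measure_sum_ge_le_of_iIndepFun_identDistrib {Ω ι : Type*} [MeasurableSpace Ω]
    {μ : Measure Ω} [IsProbabilityMeasure μ] {R : ι → Ω → ℝ} (hmeas : ∀ k, Measurable (R k))
    (hindep : iIndepFun R μ) {j : ι} (hident : ∀ k, IdentDistrib (R k) (R j) μ μ)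
    {t : ℝ} (ht : 0 ≤ t) (hint : Integrable (fun ω => Real.exp (t * R j ω)) μ)
    (s : Finset ι) (x : ℝ) :
    μ {ω | x ≤ ∑ k ∈ s, R k ω} ≤
      ENNReal.ofReal (Real.exp (-t * x)) * ENNReal.ofReal (mgf (R j) μ t) ^ s.card := by
  have hint_sum : Integrable (fun ω => Real.exp (t * (∑ k ∈ s, R k) ω)) μ :=
    hindep.integrable_exp_mul_sum hmeas fun k _ =>
      ((hident k).comp (measurable_const_mul t).exp).integrable_iff.2 hint
  have hmgf : mgf (∑ k ∈ s, R k) μ t = mgf (R j) μ t ^ s.card := by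
    rw [hindep.mgf_sum hmeas, Finset.prod_congr rfl fun k _ =>
      mgf_congr_of_identDistrib _ _ (hident k) t, Finset.prod_const]
  have hchernoff := measure_ge_le_exp_mul_mgf x ht hint_sum
  simp only [hmgf, Finset.sum_apply] at hchernoff
  rw [← ofReal_measureReal, ← ENNReal.ofReal_pow mgf_nonneg,
    ← ENNReal.ofReal_mul (Real.exp_nonneg _)]
  exact ENNReal.ofReal_le_ofReal hchernoff

lemma ProbabilityTheory.IndepFun.measure_mem_index_le_tsum {Ω β : Type*} [MeasurableSpace Ω] [MeasurableSpace β]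
    {μ : Measure Ω} {N : Ω → ℕ} {Y : Ω → β} (h : IndepFun N Y μ) {A : ℕ → Set β}
    (hA : ∀ n, MeasurableSet (A n)) :
    μ {ω | Y ω ∈ A (N ω)} ≤ ∑' n, μ {ω | N ω = n} * μ (Y ⁻¹' A n) := by
  have hsplit : {ω | Y ω ∈ A (N ω)} = ⋃ n, N ⁻¹' {n} ∩ Y ⁻¹' A n := by
    ext ω; simp
  rw [hsplit]
  refine (measure_iUnion_le _).trans_eq (tsum_congr fun n => ?_)
  exact (indepFun_iff_measure_inter_preimage_eq_mul.1 h) {n} (A n) (measurableSet_singleton n)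
    (hA n)

lemma tsum_measure_eq_mul_pow_ne_top_of_geometric {Ω : Type*} [MeasurableSpace Ω]
    {μ : Measure Ω} [IsFiniteMeasure μ] {N : Ω → ℕ} {p : ℝ} (hp1 : p ≤ 1)
    (hgeom : ∀ n : ℕ, 1 ≤ n → μ {ω | N ω = n} = ENNReal.ofReal (p * (1 - p) ^ (n - 1)))
    {M : ℝ≥0∞} (hM : M ≠ ⊤) (hpM : ENNReal.ofReal (1 - p) * M < 1) :
    ∑' n, μ {ω | N ω = n} * M ^ n ≠ ⊤ := by
  have hterm : ∀ n : ℕ, μ {ω | N ω = n + 1} * M ^ (n + 1) =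
      ENNReal.ofReal p * M * (ENNReal.ofReal (1 - p) * M) ^ n := by
    intro n
    rw [hgeom (n + 1) n.succ_pos, Nat.add_sub_cancel,
      ENNReal.ofReal_mul' (pow_nonneg (by linarith) n), ENNReal.ofReal_pow (by linarith)]
    ring
  rw [tsum_eq_zero_add' ENNReal.summable, tsum_congr hterm, ENNReal.tsum_mul_left]
  refine ENNReal.add_ne_top.2 ⟨ENNReal.mul_ne_top (measure_ne_top μ _) (by simp), ?_⟩
  exact ENNReal.mul_ne_top (ENNReal.mul_ne_top ENNReal.ofReal_ne_top hM)
    (tsum_geometric_lt_top.2 hpM).ne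

theorem stmt_2_general {Ω : Type*} [MeasurableSpace Ω] (μ : Measure Ω) [IsProbabilityMeasure μ]
    (R : ℕ → Ω → ℝ) (hmeas : ∀ k, Measurable (R k))
    (hindep : iIndepFun R μ)
    (hident : ∀ k, IdentDistrib (R k) (R 1) μ μ)
    (hnonneg : ∀ k ω, 0 ≤ R k ω)
    (C γ : ℝ) (hγ : 0 < γ)
    (hbd : ∀ x : ℝ, 0 ≤ x → μ {ω | x ≤ R 1 ω} ≤ ENNReal.ofReal (C * Real.exp (-γ * x)))
    (N : Ω → ℕ) (p : ℝ) (hp : 0 < p) (hp1 : p ≤ 1)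
    (hgeom : ∀ n : ℕ, 1 ≤ n → μ {ω | N ω = n} = ENNReal.ofReal (p * (1 - p) ^ (n - 1)))
    (hNindep : IndepFun N (fun ω k => R k ω) μ) :
    ∃ C' γ' : ℝ, 0 < γ' ∧
      ∀ x : ℝ, 0 ≤ x →
        μ {ω | x ≤ ∑ k ∈ Finset.Icc 1 (N ω), R k ω} ≤ ENNReal.ofReal (C' * Real.exp (-γ' * x)) := by
  -- `1 + p` is chosen so that `(1 - p) * mgf (R 1) μ t ≤ 1 - p ^ 2 < 1`.
  obtain ⟨t, ht, hint, hmgf⟩ := exists_pos_mem_integrableExpSet_mgf_lt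
    (zero_mem_interior_integrableExpSet_of_tail_le (hmeas 1) (hnonneg 1) hγ hbd)
    (lt_add_of_pos_right 1 hp)
  set M := ENNReal.ofReal (mgf (R 1) μ t)
  set G := ∑' n, μ {ω | N ω = n} * M ^ n
  have hG : G ≠ ⊤ := by
    refine tsum_measure_eq_mul_pow_ne_top_of_geometric hp1 hgeom ENNReal.ofReal_ne_top ?_
    rw [← ENNReal.ofReal_mul (by linarith)]
    exact ENNReal.ofReal_lt_one.2 (by nlinarith [mgf_nonneg (X := R 1) (μ := μ) (t := t)])
  refine ⟨G.toReal, t, ht, fun x _ => ?_⟩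
  have hA : ∀ n, MeasurableSet {f : ℕ → ℝ | x ≤ ∑ k ∈ Finset.Icc 1 n, f k} := fun n =>
    measurableSet_le measurable_const (Finset.measurable_sum _ fun k _ => measurable_pi_apply k)
  calc μ {ω | x ≤ ∑ k ∈ Finset.Icc 1 (N ω), R k ω}
      ≤ ∑' n, μ {ω | N ω = n} * μ {ω | x ≤ ∑ k ∈ Finset.Icc 1 n, R k ω} :=
        hNindep.measure_mem_index_le_tsum hA
    _ ≤ ∑' n, μ {ω | N ω = n} * (ENNReal.ofReal (Real.exp (-t * x)) * M ^ n) := by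
        refine ENNReal.tsum_le_tsum fun n => ?_
        gcongr
        simpa using measure_sum_ge_le_of_iIndepFun_identDistrib hmeas hindep hident ht.le hint
          (Finset.Icc 1 n) x
    _ = ENNReal.ofReal (G.toReal * Real.exp (-t * x)) := by
        simp_rw [mul_left_comm _ (ENNReal.ofReal _)]
        rw [ENNReal.tsum_mul_left, ENNReal.ofReal_mul ENNReal.toReal_nonneg,
          ENNReal.ofReal_toReal hG, mul_comm]

theorem stmt_2 {Ω : Type*} [MeasurableSpace Ω] (μ : Measure Ω) [IsProbabilityMeasure μ]
    (R : ℕ → Ω → ℝ) (hmeas : ∀ k, Measurable (R k))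
    (hindep : iIndepFun R μ)
    (hident : ∀ k, IdentDistrib (R k) (R 1) μ μ)
    (hnonneg : ∀ k ω, 0 ≤ R k ω)
    (C γ : ℝ) (hγ : 0 < γ)
    (hbd : ∀ x : ℝ, 0 ≤ x → μ {ω | x ≤ R 1 ω} ≤ ENNReal.ofReal (C * Real.exp (-γ * x)))
    (N : Ω → ℕ) (hNmeas : Measurable N) (p : ℝ) (hp : 0 < p) (hp1 : p ≤ 1)
    (hgeom : ∀ n : ℕ, 1 ≤ n → μ {ω | N ω = n} = ENNReal.ofReal (p * (1 - p) ^ (n - 1)))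
    (hNindep : IndepFun N (fun ω k => R k ω) μ) :
    ∃ C' γ' : ℝ, 0 < γ' ∧
      ∀ x : ℝ, 0 ≤ x →
        μ {ω | x ≤ ∑ k ∈ Finset.Icc 1 (N ω), R k ω} ≤ ENNReal.ofReal (C' * Real.exp (-γ' * x)) :=
  stmt_2_general μ R hmeas hindep hident hnonneg C γ hγ hbd N p hp hp1 hgeom hNindep
end

section
/- Let X and T be integrable real random variables with X ≥ 1 almost surely, T > 0 almost surely, and suppose that X is integer-valued while T has a continuous (atomless) distribution. Then E[(X·E[T] − T·E[X])²] > 0. -/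
/-! If the variance vanished, then `T = X · E T / E X` almost surely, so the law of `T` would be
carried by the countable set `{k · E T / E X : k ∈ ℤ}`; an atomless law gives that set measure
zero. -/

namespace MeasureTheory

variable {Ω : Type*} [MeasurableSpace Ω] {μ : Measure Ω}

theorem Measure.eq_zero_of_ae_mem_countable {α : Type*} {T : Ω → α} {S : Set α} (hS : S.Countable)
    (hatom : ∀ t, μ {ω | T ω = t} = 0)
    (hT : ∀ᵐ ω ∂μ, T ω ∈ S) : μ = 0 := by
  have hpre : μ (T ⁻¹' S) = 0 := by
    rw [← Set.biUnion_preimage_singleton]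
    exact (measure_biUnion_null_iff hS).2 fun t _ => hatom t
  have hnot : ∀ᵐ ω ∂μ, T ω ∉ S := measure_eq_zero_iff_ae_notMem.1 hpre
  rw [← ae_eq_bot, ← Filter.empty_mem_iff_bot]
  filter_upwards [hT, hnot] with ω h h' using h' h

theorem ae_eq_zero_of_lintegral_ofReal_sq_eq_zero {f : Ω → ℝ} (hf : AEMeasurable f μ)
    (h : ∫⁻ ω, ENNReal.ofReal (f ω ^ 2) ∂μ = 0) : f =ᵐ[μ] 0 := by
  have hsq := (lintegral_eq_zero_iff' (hf.pow_const 2).ennreal_ofReal).1 h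
  filter_upwards [hsq] with ω hω
  exact pow_eq_zero_iff two_ne_zero |>.1 <| le_antisymm (ENNReal.ofReal_eq_zero.1 hω) (sq_nonneg _)

end MeasureTheory

open MeasureTheory

theorem stmt_8_general {Ω : Type*} [MeasurableSpace Ω] (μ : Measure Ω) [IsProbabilityMeasure μ]
    (X T : Ω → ℝ) (hTm : Measurable T)
    (hXint : Integrable X μ)
    (hX1 : ∀ᵐ ω ∂μ, 1 ≤ X ω)
    (hXint' : ∀ᵐ ω ∂μ, ∃ k : ℤ, X ω = k)
    (hTatomless : ∀ t : ℝ, μ {ω | T ω = t} = 0) :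
    0 < ∫⁻ ω, ENNReal.ofReal ((X ω * ∫ ω', T ω' ∂μ - T ω * ∫ ω', X ω' ∂μ) ^ 2) ∂μ := by
  set ET := ∫ ω', T ω' ∂μ
  set EX := ∫ ω', X ω' ∂μ
  have hEX : 0 < EX := by
    have : 1 ≤ EX := by simpa using integral_mono_ae (integrable_const 1) hXint hX1
    linarith
  refine pos_iff_ne_zero.2 fun h => ?_
  have hvar := ae_eq_zero_of_lintegral_ofReal_sq_eq_zero
    ((hXint.aemeasurable.mul_const _).sub (hTm.aemeasurable.mul_const _)) h
  have hT : ∀ᵐ ω ∂μ, T ω ∈ Set.range fun k : ℤ => (k : ℝ) * ET / EX := by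
    filter_upwards [hvar, hXint'] with ω hω ⟨k, hk⟩
    refine ⟨k, show (k : ℝ) * ET / EX = T ω from ?_⟩
    rw [← hk, div_eq_iff hEX.ne']
    simpa [sub_eq_zero] using hω
  exact IsProbabilityMeasure.ne_zero μ
    (Measure.eq_zero_of_ae_mem_countable (Set.countable_range _) hTatomless hT)

theorem stmt_8 {Ω : Type*} [MeasurableSpace Ω] (μ : Measure Ω) [IsProbabilityMeasure μ]
    (X T : Ω → ℝ) (hXm : Measurable X) (hTm : Measurable T)
    (hXint : Integrable X μ) (hTint : Integrable T μ)
    (hX1 : ∀ᵐ ω ∂μ, 1 ≤ X ω) (hTpos : ∀ᵐ ω ∂μ, 0 < T ω)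
    (hXint' : ∀ᵐ ω ∂μ, ∃ k : ℤ, X ω = k)
    (hTatomless : ∀ t : ℝ, μ {ω | T ω = t} = 0) :
    0 < ∫⁻ ω, ENNReal.ofReal ((X ω * ∫ ω', T ω' ∂μ - T ω * ∫ ω', X ω' ∂μ) ^ 2) ∂μ :=
  stmt_8_general μ X T hTm hXint hX1 hXint' hTatomless
end
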